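/- Let G be a simple connected graph with n ≥ 2 vertices and m edges, and write a_k = d(G,k). Then the TSZ index of the Mycielskian of G is TSZ(μ(G)) = 22n² − 13n − 37m − 28a_2 − 10a_3. -/

import Mathlib

open SimpleGraph Polynomial Finset

/-- The Mycielskian `μ(G)` of a simple graph `G`. Vertices `Sum.inl v` are the original
vertices `v_i`, vertices `Sum.inr (Sum.inl v)` are the shadow vertices `u_i`, and
`Sum.inr (Sum.inr ())` is the apex vertex `w`.  Edges: the edges of `G`, the edges `w u_i`,
and the edges `u_i v_j`, `u_j v_i` for every edge `v_i v_j` of `G`. -/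
def mycielskian {V : Type*} (G : SimpleGraph V) : SimpleGraph (V ⊕ V ⊕ Unit) :=
  SimpleGraph.fromRel (fun a b =>
    match a, b with
    | Sum.inl a, Sum.inl b => G.Adj a b
    | Sum.inl a, Sum.inr (Sum.inl b) => G.Adj a b
    | Sum.inr (Sum.inl _), Sum.inr (Sum.inr _) => True
    | _, _ => False)

/-- `distCount G k` is `d(G,k)`, the number of unordered pairs of distinct vertices of `G`
whose graph distance is exactly `k`. -/
noncomputable def distCount {V : Type*} (G : SimpleGraph V) (k : ℕ) : ℕ :=
  Nat.card {e : Sym2 V // ¬ e.IsDiag ∧ Sym2.lift ⟨G.dist, fun _ _ => G.dist_comm⟩ e = k}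

/-- The Hosoya polynomial `H(G,x) = Σ_{k=1}^{D(G)} d(G,k) x^k` (with rational coefficients). -/
noncomputable def hosoya {V : Type*} (G : SimpleGraph V) : Polynomial ℚ :=
  ∑ k ∈ Finset.Icc 1 G.diam, (distCount G k : ℚ) • Polynomial.X ^ k

/-- The Wiener index `W(G)`: the sum of distances over all unordered pairs of distinct
vertices (the diagonal contributes `0`, so we may sum over ordered pairs and halve). -/
noncomputable def wiener {V : Type*} (G : SimpleGraph V) [Fintype V] : ℚ :=
  (∑ u : V, ∑ v : V, (G.dist u v : ℚ)) / 2

/-- The Hyper-Wiener index `WW(G) = (1/2) Σ_{{u,v}} (d(u,v)² + d(u,v))`. -/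
noncomputable def hyperWiener {V : Type*} (G : SimpleGraph V) [Fintype V] : ℚ :=
  (∑ u : V, ∑ v : V, ((G.dist u v : ℚ) ^ 2 + (G.dist u v : ℚ))) / 4

/-- The TSZ index `TSZ(G) = (1/6) Σ_{{u,v}} d³ + (1/2) Σ_{{u,v}} d² + (1/3) Σ_{{u,v}} d`. -/
noncomputable def tszIndex {V : Type*} (G : SimpleGraph V) [Fintype V] : ℚ :=
  (∑ u : V, ∑ v : V, (G.dist u v : ℚ) ^ 3) / 12
    + (∑ u : V, ∑ v : V, (G.dist u v : ℚ) ^ 2) / 4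
    + (∑ u : V, ∑ v : V, (G.dist u v : ℚ)) / 6

/-- The Harary index `Har(G) = Σ_{{u,v}} 1/d(u,v)` (diagonal terms are `0⁻¹ = 0`). -/
noncomputable def harary {V : Type*} (G : SimpleGraph V) [Fintype V] : ℚ :=
  (∑ u : V, ∑ v : V, ((G.dist u v : ℚ))⁻¹) / 2

/-- The closeness `C(G) = Σ_u Σ_{v ≠ u} 2^{-d(u,v)}` over ordered pairs of distinct vertices. -/
noncomputable def closeness {V : Type*} (G : SimpleGraph V) [Fintype V] : ℚ :=
  letI := Classical.decEq V
  ∑ u : V, ∑ v : V, if v = u then 0 else ((1 : ℚ) / 2) ^ (G.dist u v)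

/-- `σ_{uv}`: the number of shortest paths (walks of length `dist u v`) from `u` to `v`. -/
noncomputable def numSP {V : Type*} (G : SimpleGraph V) (u v : V) : ℕ :=
  Nat.card {p : G.Walk u v // p.length = G.dist u v}

/-- `σ_{uv}(w)`: the number of shortest paths from `u` to `v` passing through `w`. -/
noncomputable def numSPthrough {V : Type*} (G : SimpleGraph V) (w u v : V) : ℕ :=
  Nat.card {p : G.Walk u v // p.length = G.dist u v ∧ w ∈ p.support}

/-- The betweenness centrality `B_w = Σ_{{u,v}, u ≠ w ≠ v} σ_{uv}(w)/σ_{uv}` of a vertex `w`,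
summed over unordered pairs of distinct vertices (ordered pairs, halved). -/
noncomputable def btwVertex {V : Type*} (G : SimpleGraph V) [Fintype V] (w : V) : ℚ :=
  letI := Classical.decEq V
  (∑ u : V, ∑ v : V,
    if u ≠ v ∧ u ≠ w ∧ v ≠ w then (numSPthrough G w u v : ℚ) / (numSP G u v) else 0) / 2

/-- The betweenness centrality of a graph: `B⁻(G) = (1/N) Σ_w B_w`. -/
noncomputable def btw {V : Type*} (G : SimpleGraph V) [Fintype V] : ℚ :=
  (∑ w : V, btwVertex G w) / (Fintype.card V)

/-- The star graph `S_n`: center `0` joined to the `n` leaves `1, …, n`. -/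
def starGraph (n : ℕ) : SimpleGraph (Fin (n + 1)) :=
  SimpleGraph.fromRel (fun a _ => a = 0)

/-- The join `G₁ ⊕ G₂` of two graphs on disjoint vertex sets: all edges of `G₁`, all edges
of `G₂`, and all edges between `V(G₁)` and `V(G₂)`. -/
def joinGraph {V₁ V₂ : Type*} (G₁ : SimpleGraph V₁) (G₂ : SimpleGraph V₂) :
    SimpleGraph (V₁ ⊕ V₂) :=
  SimpleGraph.fromRel (fun a b =>
    match a, b with
    | Sum.inl a, Sum.inl b => G₁.Adj a b
    | Sum.inr a, Sum.inr b => G₂.Adj a b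
    | Sum.inl _, Sum.inr _ => True
    | _, _ => False)

/-! When `G` has no isolated vertex, every distance in `μ(G)` is read off from `G`:
`d(v_i, v_j) = min(d(i, j), 4)`, `d(u_i, v_j) = min(d(i, j), 3)` for `i ≠ j`,
`d(u_i, v_i) = d(u_i, u_j) = d(w, v_i) = 2` and `d(w, u_i) = 1`. For the lower bounds, a shortest
walk through `w` has length at least `d(x, w) + d(w, y)`, and one avoiding `w` becomes a walk of `G`
of the same length once each `u_i` is collapsed onto `v_i`. Since every distance is capped at `4`,
summing the weights leaves only `n`, `a₁ = m`, `a₂` and `a₃`. -/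

namespace SimpleGraph

variable {V : Type*} (G : SimpleGraph V)

def distGraph (k : ℕ) : SimpleGraph V where
  Adj u v := u ≠ v ∧ G.dist u v = k
  symm := ⟨fun _ _ h => ⟨h.1.symm, G.dist_comm ▸ h.2⟩⟩
  loopless := ⟨fun _ h => h.1 rfl⟩

lemma distGraph_one : G.distGraph 1 = G := by
  ext u v
  exact ⟨fun h => dist_eq_one_iff_adj.mp h.2, fun h => ⟨h.ne, dist_eq_one_iff_adj.mpr h⟩⟩

lemma distCount_eq_card_edgeSet (k : ℕ) : distCount G k = Nat.card (G.distGraph k).edgeSet := by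
  refine Nat.card_congr (Equiv.subtypeEquivRight fun e => ?_)
  induction e with
  | _ u v => simp [distGraph]

variable {G}

lemma Walk.dist_add_dist_le_length [DecidableEq V] {u v w : V} (p : G.Walk u v)
    (hw : w ∈ p.support) : G.dist u w + G.dist w v ≤ p.length :=
  calc G.dist u w + G.dist w v ≤ (p.takeUntil w hw).length + (p.dropUntil w hw).length :=
        add_le_add (dist_le _) (dist_le _)
    _ = p.length := by rw [← Walk.length_append, p.take_spec hw]

lemma dist_eq_two_of_adj_of_adj {u v w : V} (hne : u ≠ w) (hna : ¬ G.Adj u w) (huv : G.Adj u v)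
    (hvw : G.Adj v w) : G.dist u w = 2 :=
  let p : G.Walk u w := .cons huv (.cons hvw .nil)
  le_antisymm (dist_le p) (Reachable.one_lt_dist_of_ne_of_not_adj ⟨p⟩ hne hna)

section Fintype

variable [Fintype V]

lemma sum_sum_ite_dist_eq {k : ℕ} (hk : k ≠ 0) (x : ℚ) :
    ∑ i, ∑ j, (if G.dist i j = k then x else 0) = 2 * distCount G k * x := by
  classical
  have hadj : ∀ i j, G.dist i j = k ↔ (G.distGraph k).Adj i j := fun i j =>
    ⟨fun h => ⟨by rintro rfl; exact hk (h ▸ G.dist_self), h⟩, And.right⟩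
  calc ∑ i, ∑ j, (if G.dist i j = k then x else 0)
      = ∑ i, ((G.distGraph k).degree i : ℚ) * x := by
        refine Finset.sum_congr rfl fun i _ => ?_
        simp only [hadj, ← card_neighborFinset_eq_degree, neighborFinset_eq_filter,
          Finset.sum_ite, Finset.sum_const_zero, Finset.sum_const, nsmul_eq_mul, add_zero]
    _ = 2 * distCount G k * x := by
        rw [← Finset.sum_mul, ← Nat.cast_sum, sum_degrees_eq_twice_card_edges,
          distCount_eq_card_edgeSet, edgeFinset_card, Nat.card_eq_fintype_card]
        push_cast
        ring

lemma sum_sum_ite_eq [DecidableEq V] (a b : ℚ) :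
    ∑ i : V, ∑ j : V, (if i = j then a else b) =
      Fintype.card V * a + ((Fintype.card V : ℚ) ^ 2 - Fintype.card V) * b := by
  have h : ∀ i j : V, (if i = j then a else b) = b + if i = j then a - b else 0 := by
    intro i j; split_ifs <;> ring
  simp only [h, Finset.sum_add_distrib, Finset.sum_ite_eq, Finset.mem_univ, if_true,
    Finset.sum_const, Finset.card_univ, nsmul_eq_mul]
  ring

lemma Connected.sum_sum_apply_ite_min [DecidableEq V] (hG : G.Connected) (g : ℕ → ℚ)
    (e c : ℕ) :
    ∑ i, ∑ j, g (if i = j then e else min (G.dist i j) c) =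
      Fintype.card V * g e + ((Fintype.card V : ℚ) ^ 2 - Fintype.card V) * g c +
        ∑ k ∈ Finset.Ico 1 c, 2 * distCount G k * (g k - g c) := by
  have hsplit : ∀ i j, g (if i = j then e else min (G.dist i j) c) =
      (if i = j then g e else g c) +
        ∑ k ∈ Finset.Ico 1 c, if G.dist i j = k then g k - g c else 0 := by
    intro i j
    rw [Finset.sum_ite_eq]
    split_ifs with hij hmem hmem
    · simp [hij] at hmem
    · ring
    · rw [min_eq_left (Finset.mem_Ico.mp hmem).2.le]; ring
    · have := hG.pos_dist_of_ne hij
      rw [Finset.mem_Ico] at hmem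
      rw [min_eq_right (by omega)]; ring
  have hcount : ∑ i, ∑ j, ∑ k ∈ Finset.Ico 1 c, (if G.dist i j = k then g k - g c else 0) =
      ∑ k ∈ Finset.Ico 1 c, 2 * distCount G k * (g k - g c) := by
    rw [Finset.sum_congr rfl fun i _ => Finset.sum_comm, Finset.sum_comm]
    refine Finset.sum_congr rfl fun k hk => sum_sum_ite_dist_eq ?_ _
    exact Nat.one_le_iff_ne_zero.mp (Finset.mem_Ico.mp hk).1
  simp only [hsplit, Finset.sum_add_distrib, sum_sum_ite_eq, hcount]

lemma Connected.sum_sum_apply_min (hG : G.Connected) (g : ℕ → ℚ) (c : ℕ) :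
    ∑ i, ∑ j, g (min (G.dist i j) c) =
      Fintype.card V * g 0 + ((Fintype.card V : ℚ) ^ 2 - Fintype.card V) * g c +
        ∑ k ∈ Finset.Ico 1 c, 2 * distCount G k * (g k - g c) := by
  classical
  rw [← hG.sum_sum_apply_ite_min g 0 c]
  congr! 3 with i _ j _
  split_ifs with hij <;> simp [hij]

end Fintype

end SimpleGraph

section Mycielskian

variable {V : Type*} {G : SimpleGraph V} {i j k : V}

local notation "apex" => (Sum.inr (Sum.inr ()) : V ⊕ V ⊕ Unit)

@[simp] lemma mycielskian_adj_inl_inl :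
    (mycielskian G).Adj (.inl i) (.inl j) ↔ G.Adj i j := by
  simp only [mycielskian, fromRel_adj, ne_eq, Sum.inl.injEq, G.adj_comm j i, or_self]
  exact and_iff_right_of_imp Adj.ne

@[simp] lemma mycielskian_adj_inl_inr_inl :
    (mycielskian G).Adj (.inl i) (.inr (.inl j)) ↔ G.Adj i j := by
  simp [mycielskian]

@[simp] lemma mycielskian_adj_inr_inl_inl :
    (mycielskian G).Adj (.inr (.inl i)) (.inl j) ↔ G.Adj i j := by
  simp [mycielskian, G.adj_comm j i]

@[simp] lemma mycielskian_not_adj_inr_inl_inr_inl :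
    ¬ (mycielskian G).Adj (.inr (.inl i)) (.inr (.inl j)) := by
  simp [mycielskian]

@[simp] lemma mycielskian_adj_inr_inl_apex : (mycielskian G).Adj (.inr (.inl i)) apex := by
  simp [mycielskian]

@[simp] lemma mycielskian_not_adj_inl_apex : ¬ (mycielskian G).Adj (.inl i) apex := by
  simp [mycielskian]

/-- Collapses `u_i` onto `v_i`; the apex has no natural image and goes to the junk value `d`. -/
def mycielskianProj (d : V) : V ⊕ V ⊕ Unit → V := Sum.elim id (Sum.elim id fun _ => d)

lemma exists_walk_mycielskianProj (d : V) {x y : V ⊕ V ⊕ Unit} (p : (mycielskian G).Walk x y)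
    (hp : apex ∉ p.support) :
    ∃ q : G.Walk (mycielskianProj d x) (mycielskianProj d y), q.length = p.length := by
  induction p with
  | nil => exact ⟨.nil, rfl⟩
  | @cons x y z h p ih =>
    simp only [Walk.support_cons, List.mem_cons, not_or] at hp
    obtain ⟨q, hq⟩ := ih hp.2
    have hadj : G.Adj (mycielskianProj d x) (mycielskianProj d y) := by
      have hy : y ≠ apex := fun hy => hp.2 (hy ▸ p.start_mem_support)
      rcases x with i | i | ⟨⟩ <;> rcases y with j | j | ⟨⟩ <;>
        simp_all [mycielskianProj]
    exact ⟨.cons hadj q, by simp [hq]⟩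

lemma min_dist_le_dist_mycielskian (d : V) {x y : V ⊕ V ⊕ Unit}
    (h : (mycielskian G).Reachable x y) :
    min (G.dist (mycielskianProj d x) (mycielskianProj d y))
      ((mycielskian G).dist x apex + (mycielskian G).dist apex y) ≤ (mycielskian G).dist x y := by
  classical
  obtain ⟨p, hp⟩ := h.exists_walk_length_eq_dist
  rw [← hp]
  by_cases hmem : apex ∈ p.support
  · exact min_le_of_right_le (p.dist_add_dist_le_length hmem)
  · obtain ⟨q, hq⟩ := exists_walk_mycielskianProj d p hmem
    exact min_le_of_left_le (hq ▸ dist_le q)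

lemma mycielskian_connected (hadj : ∀ i, ∃ j, G.Adj i j) : (mycielskian G).Connected := by
  refine (mycielskian G).connected_iff_exists_forall_reachable.mpr ⟨apex, ?_⟩
  rintro (i | i | ⟨⟩)
  · obtain ⟨j, hij⟩ := hadj i
    exact mycielskian_adj_inr_inl_apex.symm.reachable.trans
      (mycielskian_adj_inr_inl_inl.mpr hij.symm).reachable
  · exact mycielskian_adj_inr_inl_apex.symm.reachable
  · rfl

@[simp] lemma mycielskian_dist_apex_inr_inl : (mycielskian G).dist apex (.inr (.inl i)) = 1 :=
  dist_eq_one_iff_adj.mpr mycielskian_adj_inr_inl_apex.symm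

@[simp] lemma mycielskian_dist_inr_inl_apex : (mycielskian G).dist (.inr (.inl i)) apex = 1 :=
  dist_eq_one_iff_adj.mpr (by simp)

lemma mycielskian_dist_inl_apex (hik : G.Adj i k) : (mycielskian G).dist (.inl i) apex = 2 :=
  dist_eq_two_of_adj_of_adj (by simp) (by simp) (mycielskian_adj_inl_inr_inl.mpr hik) (by simp)

lemma mycielskian_dist_apex_inl (hik : G.Adj i k) : (mycielskian G).dist apex (.inl i) = 2 := by
  rw [dist_comm, mycielskian_dist_inl_apex hik]

lemma mycielskian_dist_inr_inl_inr_inl [DecidableEq V] :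
    (mycielskian G).dist (.inr (.inl i)) (.inr (.inl j)) = if i = j then 0 else 2 := by
  split_ifs with hij
  · simp [hij]
  · exact dist_eq_two_of_adj_of_adj (by simpa) (by simp) (by simp)
      (adj_symm _ mycielskian_adj_inr_inl_apex)

lemma mycielskian_dist_inl_inl_le (hij : G.Reachable i j) :
    (mycielskian G).dist (.inl i) (.inl j) ≤ G.dist i j := by
  obtain ⟨q, hq⟩ := hij.exists_walk_length_eq_dist
  exact (dist_le (q.map ⟨Sum.inl, mycielskian_adj_inl_inl.mpr⟩)).trans_eq
    (by rw [Walk.length_map, hq])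

lemma mycielskian_dist_inl_inl (hG : G.Connected) (hadj : ∀ i, ∃ j, G.Adj i j) :
    (mycielskian G).dist (.inl i) (.inl j) = min (G.dist i j) 4 := by
  have hM := mycielskian_connected hadj
  obtain ⟨i', hi⟩ := hadj i
  obtain ⟨j', hj⟩ := hadj j
  refine le_antisymm (le_min (mycielskian_dist_inl_inl_le (hG.preconnected i j)) ?_) ?_
  · simpa [mycielskian_dist_inl_apex hi, mycielskian_dist_apex_inl hj] using
      hM.dist_triangle (u := .inl i) (v := apex) (w := .inl j)
  · simpa [mycielskianProj, mycielskian_dist_inl_apex hi, mycielskian_dist_apex_inl hj] using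
      min_dist_le_dist_mycielskian i (hM.preconnected (.inl i) (.inl j))

lemma mycielskian_dist_inr_inl_inl [DecidableEq V] (hG : G.Connected)
    (hadj : ∀ i, ∃ j, G.Adj i j) :
    (mycielskian G).dist (.inr (.inl i)) (.inl j) = if i = j then 2 else min (G.dist i j) 3 := by
  have hM := mycielskian_connected hadj
  obtain ⟨j', hj⟩ := hadj j
  split_ifs with hij
  · subst hij
    exact dist_eq_two_of_adj_of_adj (by simp) (by simp)
      (mycielskian_adj_inr_inl_inl.mpr hj) (mycielskian_adj_inl_inl.mpr hj.symm)
  obtain ⟨q, hq⟩ := hG.exists_walk_length_eq_dist i j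
  refine le_antisymm (le_min ?_ ?_) ?_
  · cases q with
    | nil => exact absurd rfl hij
    | @cons _ k _ h q =>
      calc (mycielskian G).dist (.inr (.inl i)) (.inl j)
          ≤ (mycielskian G).dist (.inr (.inl i)) (.inl k) +
              (mycielskian G).dist (.inl k) (.inl j) := hM.dist_triangle
        _ ≤ 1 + G.dist k j := by
            rw [dist_eq_one_iff_adj.mpr (mycielskian_adj_inr_inl_inl.mpr h)]
            exact Nat.add_le_add_left (mycielskian_dist_inl_inl_le (hG.preconnected k j)) 1
        _ ≤ G.dist i j := by
            rw [← hq, Walk.length_cons, add_comm]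
            exact Nat.add_le_add_right (dist_le q) 1
  · simpa [mycielskian_dist_apex_inl hj] using
      hM.dist_triangle (u := .inr (.inl i)) (v := apex) (w := .inl j)
  · simpa [mycielskianProj, mycielskian_dist_apex_inl hj] using
      min_dist_le_dist_mycielskian i (hM.preconnected (.inr (.inl i)) (.inl j))

lemma mycielskian_dist_inl_inr_inl [DecidableEq V] (hG : G.Connected)
    (hadj : ∀ i, ∃ j, G.Adj i j) :
    (mycielskian G).dist (.inl i) (.inr (.inl j)) = if i = j then 2 else min (G.dist i j) 3 := by
  rw [dist_comm, mycielskian_dist_inr_inl_inl hG hadj, G.dist_comm]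
  exact if_congr eq_comm rfl rfl

end Mycielskian

/-- Half the weight `d(d+1)(d+2)/6` of a pair at distance `d`: `tszIndex` sums over ordered
pairs. -/
def tszWeight (d : ℕ) : ℚ := (d : ℚ) ^ 3 / 12 + (d : ℚ) ^ 2 / 4 + d / 6

lemma tszIndex_eq_sum_sum_tszWeight {V : Type*} [Fintype V] (G : SimpleGraph V) :
    tszIndex G = ∑ u, ∑ v, tszWeight (G.dist u v) := by
  simp only [tszIndex, tszWeight, Finset.sum_add_distrib, Finset.sum_div]

/-- For a connected graph `G` with `n ≥ 2` vertices and `m` edges, with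
`a_k = d(G,k)`, the TSZ index of `μ(G)` is `22n² - 13n - 37m - 28a₂ - 10a₃`. -/
theorem stmt_10 {V : Type*} [Fintype V] (G : SimpleGraph V) (n m : ℕ)
    (hn : Fintype.card V = n) (hn2 : 2 ≤ n) (hm : Nat.card G.edgeSet = m)
    (hc : G.Connected) :
    tszIndex (mycielskian G) =
      22 * (n : ℚ) ^ 2 - 13 * n - 37 * m - 28 * distCount G 2 - 10 * distCount G 3 := by
  classical
  have : Nontrivial V := Fintype.one_lt_card_iff_nontrivial.mp (by omega)
  have hadj : ∀ i, ∃ j, G.Adj i j := hc.preconnected.exists_adj_of_nontrivial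
  have hm1 : distCount G 1 = m := by rw [distCount_eq_card_edgeSet, distGraph_one, hm]
  rw [tszIndex_eq_sum_sum_tszWeight]
  simp only [Fintype.sum_sum_type, Fintype.sum_unique, PUnit.default_eq_unit,
    Finset.sum_add_distrib, mycielskian_dist_inl_inl hc hadj,
    mycielskian_dist_inl_inr_inl hc hadj, mycielskian_dist_inr_inl_inl hc hadj,
    mycielskian_dist_inr_inl_inr_inl, fun i => mycielskian_dist_inl_apex (hadj i).choose_spec,
    fun i => mycielskian_dist_apex_inl (hadj i).choose_spec, mycielskian_dist_inr_inl_apex,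
    mycielskian_dist_apex_inr_inl, dist_self]
  rw [hc.sum_sum_apply_min, hc.sum_sum_apply_ite_min]
  simp only [apply_ite tszWeight, sum_sum_ite_eq]
  simp only [Finset.sum_const, Finset.card_univ, nsmul_eq_mul, hn, ← hm1,
    Finset.sum_Ico_eq_sum_range, Nat.reduceSub, Finset.sum_range_succ, Finset.sum_range_zero,
    tszWeight]
  push_cast
  ring
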